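/- arXiv:1709.06630 — 2 statements merged into one kernel-verified Lean document; each statement's English description precedes it below -/
import Mathlib

section
/- Let E ⊂ ℂ be a compact set with Markov constants Mₙ (the norm of the differentiation operator on polynomials of degree at most n with sup norm on E). Let (Cₙ) be a sequence of reals with Cₙ ≥ 1, and let (aₙ)_{n≥0} be a pseudo Leja sequence in E of Edrei growth (Cₙ), i.e., Cₙ|wₙ(aₙ)| ≥ ‖wₙ‖_E for all n ≥ 1, where wₙ(z) = ∏_{k=0}^{n-1}(z - aₖ). Assume all aⱼ are distinct and Mₙ < ∞. Then the separation quantity σₙ = min_{0 ≤ j ≤ n-1} |aₙ - aⱼ| satisfies σₙ ≥ log(1 + 1/Cₙ)/Mₙ. -/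
/-!
With `w(z) = ∏_{k<n} (z - aₖ)` we have `w(aⱼ) = 0`, so Taylor's formula at `aⱼ` and the iterated
Markov bound `‖w⁽ˡ⁾‖_E ≤ Mˡ ‖w‖_E` give
`|w(aₙ)| ≤ (e^{M |aₙ - aⱼ|} - 1) ‖w‖_E ≤ (e^{M |aₙ - aⱼ|} - 1) C |w(aₙ)|`.
The points being distinct, `w(aₙ) ≠ 0`, hence `1 + 1/C ≤ e^{M |aₙ - aⱼ|}`.
-/

open Polynomial Finset Nat

theorem Real.sum_range_pow_succ_div_factorial_le_exp_sub_one {t : ℝ} (ht : 0 ≤ t) (n : ℕ) :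
    ∑ i ∈ range n, t ^ (i + 1) / (i + 1)! ≤ Real.exp t - 1 := by
  have h := Real.sum_le_exp_of_nonneg ht (n + 1)
  rw [sum_range_succ'] at h
  simp only [pow_zero, Nat.factorial_zero, Nat.cast_one, div_one] at h
  linarith

namespace Polynomial

variable {𝕜 : Type*} [RCLike 𝕜]

theorem norm_taylor_coeff (p : 𝕜[X]) (x : 𝕜) (i : ℕ) :
    ‖(taylor x p).coeff i‖ = ‖(derivative^[i] p).eval x‖ / i ! := by
  have h : (derivative^[i] p).eval x = (i ! : 𝕜) * (hasseDeriv i p).eval x := by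
    rw [← factorial_smul_hasseDeriv, LinearMap.smul_apply, eval_smul, nsmul_eq_mul]
  rw [taylor_coeff, h, norm_mul, RCLike.norm_natCast, mul_div_cancel_left₀ _ (by positivity)]

theorem norm_eval_sub_eval_le_sum (p : 𝕜[X]) (x y : 𝕜) :
    ‖p.eval y - p.eval x‖ ≤ ∑ i ∈ range p.natDegree,
      ‖(derivative^[i + 1] p).eval x‖ / (i + 1)! * ‖y - x‖ ^ (i + 1) := by
  have hdeg : (taylor x p).natDegree < p.natDegree + 1 := by
    rw [natDegree_taylor]; omega
  have hexpand :
      p.eval y = ∑ i ∈ range (p.natDegree + 1), (taylor x p).coeff i * (y - x) ^ i := by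
    rw [← eval_eq_sum_range' hdeg, taylor_eval, sub_add_cancel]
  have hconst : (taylor x p).coeff 0 = p.eval x := by simp [taylor_coeff]
  rw [hexpand, sum_range_succ', hconst, pow_zero, mul_one, add_sub_cancel_right]
  refine (norm_sum_le _ _).trans (sum_le_sum fun i _ => ?_)
  rw [norm_mul, norm_pow, norm_taylor_coeff]

theorem norm_eval_sub_eval_le_exp {p : 𝕜[X]} {x : 𝕜} {M K : ℝ} (hM : 0 ≤ M) (hK : 0 ≤ K)
    (hbound : ∀ i, ‖(derivative^[i + 1] p).eval x‖ ≤ M ^ (i + 1) * K) (y : 𝕜) :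
    ‖p.eval y - p.eval x‖ ≤ (Real.exp (M * ‖y - x‖) - 1) * K := by
  set t := M * ‖y - x‖
  calc ‖p.eval y - p.eval x‖
      ≤ ∑ i ∈ range p.natDegree,
          ‖(derivative^[i + 1] p).eval x‖ / (i + 1)! * ‖y - x‖ ^ (i + 1) :=
        norm_eval_sub_eval_le_sum p x y
    _ ≤ ∑ i ∈ range p.natDegree, t ^ (i + 1) / (i + 1)! * K := by
        refine sum_le_sum fun i _ => ?_
        calc ‖(derivative^[i + 1] p).eval x‖ / (i + 1)! * ‖y - x‖ ^ (i + 1)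
            ≤ M ^ (i + 1) * K / (i + 1)! * ‖y - x‖ ^ (i + 1) := by gcongr; exact hbound i
          _ = t ^ (i + 1) / (i + 1)! * K := by rw [mul_pow]; ring
    _ = (∑ i ∈ range p.natDegree, t ^ (i + 1) / (i + 1)!) * K := (sum_mul ..).symm
    _ ≤ (Real.exp t - 1) * K :=
        mul_le_mul_of_nonneg_right
          (Real.sum_range_pow_succ_div_factorial_le_exp_sub_one (by positivity) _) hK

end Polynomial

section MarkovInequality

variable {𝕜 : Type*} [RCLike 𝕜]

/-- The uniform norm `‖p‖_E` (junk value `0` when `E` is unbounded). -/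
noncomputable def supNormOn (E : Set 𝕜) (p : 𝕜[X]) : ℝ :=
  sSup ((fun z => ‖p.eval z‖) '' E)

/-- `M` is a bound for the Markov constant `Mₙ` of `E`. -/
def IsMarkovBound (E : Set 𝕜) (n : ℕ) (M : ℝ) : Prop :=
  ∀ p : 𝕜[X], p.natDegree ≤ n → supNormOn E (derivative p) ≤ M * supNormOn E p

variable {E : Set 𝕜}

theorem supNormOn_nonneg (p : 𝕜[X]) : 0 ≤ supNormOn E p :=
  Real.sSup_nonneg (by rintro _ ⟨z, -, rfl⟩; positivity)

theorem norm_eval_le_supNormOn (hE : IsCompact E) (p : 𝕜[X]) {z : 𝕜} (hz : z ∈ E) :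
    ‖p.eval z‖ ≤ supNormOn E p :=
  le_csSup (hE.image (continuous_norm.comp p.continuous)).bddAbove ⟨z, hz, rfl⟩

theorem IsMarkovBound.supNormOn_iterate_derivative_le {n : ℕ} {M : ℝ}
    (hM : IsMarkovBound E n M) (hM0 : 0 ≤ M) {p : 𝕜[X]} (hp : p.natDegree ≤ n) (i : ℕ) :
    supNormOn E (derivative^[i] p) ≤ M ^ i * supNormOn E p := by
  induction i with
  | zero => simp
  | succ i ih =>
    have hdeg : (derivative^[i] p).natDegree ≤ n :=
      (natDegree_iterate_derivative p i).trans ((Nat.sub_le _ _).trans hp)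
    rw [Function.iterate_succ_apply', _root_.pow_succ']
    calc supNormOn E (derivative (derivative^[i] p))
        ≤ M * supNormOn E (derivative^[i] p) := hM _ hdeg
      _ ≤ M * (M ^ i * supNormOn E p) := by gcongr
      _ = M * M ^ i * supNormOn E p := by ring

theorem IsMarkovBound.norm_eval_sub_eval_le (hE : IsCompact E) {n : ℕ} {M : ℝ}
    (hM : IsMarkovBound E n M) (hM0 : 0 ≤ M) {p : 𝕜[X]} (hp : p.natDegree ≤ n)
    {x : 𝕜} (hx : x ∈ E) (y : 𝕜) :
    ‖p.eval y - p.eval x‖ ≤ (Real.exp (M * ‖y - x‖) - 1) * supNormOn E p :=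
  norm_eval_sub_eval_le_exp hM0 (supNormOn_nonneg p)
    (fun i => (norm_eval_le_supNormOn hE _ hx).trans
      (hM.supNormOn_iterate_derivative_le hM0 hp (i + 1))) y

end MarkovInequality

theorem Real.log_one_add_one_div_le {C t : ℝ} (hC : 0 < C) (h : 1 ≤ C * (Real.exp t - 1)) :
    Real.log (1 + 1 / C) ≤ t := by
  have h' : 1 + 1 / C ≤ Real.exp t := by
    have : 1 / C ≤ Real.exp t - 1 := by rw [div_le_iff₀ hC]; linarith
    linarith
  calc Real.log (1 + 1 / C) ≤ Real.log (Real.exp t) := Real.log_le_log (by positivity) h'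
    _ = t := Real.log_exp t

theorem pseudo_leja_separation_general (E : Set ℂ) (hE : IsCompact E)
    (a : ℕ → ℂ) (haE : ∀ n, a n ∈ E) (hinj : Function.Injective a)
    (C : ℝ) (M : ℝ) (hC : 1 ≤ C) (hMpos : 0 < M)
    (n : ℕ)
    (hM : ∀ p : Polynomial ℂ, p.natDegree ≤ n →
      sSup ((fun z => ‖(Polynomial.derivative p).eval z‖) '' E) ≤
        M * sSup ((fun z => ‖p.eval z‖) '' E))
    (hleja : sSup ((fun z => ‖∏ k ∈ Finset.range n, (z - a k)‖) '' E) ≤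
      C * ‖∏ k ∈ Finset.range n, (a n - a k)‖) :
    ∀ j < n, Real.log (1 + 1 / C) / M ≤ ‖a n - a j‖ := by
  intro j hj
  set w : ℂ[X] := ∏ k ∈ range n, (X - Polynomial.C (a k))
  have hw_eval (z : ℂ) : w.eval z = ∏ k ∈ range n, (z - a k) := by simp [w, eval_prod]
  have hw_deg : w.natDegree = n := by
    simp [w, natDegree_prod_of_monic _ _ (fun k _ => monic_X_sub_C (a k))]
  have hw_aj : w.eval (a j) = 0 := by
    rw [hw_eval]; exact prod_eq_zero (mem_range.mpr hj) (sub_self _)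
  have hw_an : 0 < ‖w.eval (a n)‖ := by
    rw [hw_eval, norm_pos_iff, prod_ne_zero_iff]
    exact fun k hk => sub_ne_zero.mpr (hinj.ne (mem_range.mp hk).ne')
  have hleja' : supNormOn E w ≤ C * ‖w.eval (a n)‖ := by
    simpa only [supNormOn, hw_eval] using hleja
  have htaylor := IsMarkovBound.norm_eval_sub_eval_le hE hM hMpos.le hw_deg.le (haE j) (a n)
  rw [hw_aj, sub_zero] at htaylor
  rw [div_le_iff₀' hMpos]
  refine Real.log_one_add_one_div_le (by linarith) (le_of_mul_le_mul_right ?_ hw_an)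
  have hexp : 0 ≤ Real.exp (M * ‖a n - a j‖) - 1 :=
    sub_nonneg.mpr (Real.one_le_exp (by positivity))
  calc 1 * ‖w.eval (a n)‖ ≤ (Real.exp (M * ‖a n - a j‖) - 1) * supNormOn E w := by
        rwa [one_mul]
    _ ≤ (Real.exp (M * ‖a n - a j‖) - 1) * (C * ‖w.eval (a n)‖) := by gcongr
    _ = C * (Real.exp (M * ‖a n - a j‖) - 1) * ‖w.eval (a n)‖ := by ring

theorem pseudo_leja_separation (E : Set ℂ) (hE : IsCompact E)
    (a : ℕ → ℂ) (haE : ∀ n, a n ∈ E) (hinj : Function.Injective a)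
    (C : ℝ) (M : ℝ) (hC : 1 ≤ C) (hMpos : 0 < M)
    (n : ℕ) (hn : 1 ≤ n)
    (hM : ∀ p : Polynomial ℂ, p.natDegree ≤ n →
      sSup ((fun z => ‖(Polynomial.derivative p).eval z‖) '' E) ≤
        M * sSup ((fun z => ‖p.eval z‖) '' E))
    (hleja : sSup ((fun z => ‖∏ k ∈ Finset.range n, (z - a k)‖) '' E) ≤
      C * ‖∏ k ∈ Finset.range n, (a n - a k)‖) :
    ∀ j < n, Real.log (1 + 1 / C) / M ≤ ‖a n - a j‖ :=
  pseudo_leja_separation_general E hE a haE hinj C M hC hMpos n hM hleja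
end

section
/- Let E ⊂ ℂ be a compact set containing at least two points, (aₙ)_{n≥0} a sequence in E with distinct terms, Cₙ ≥ 1 reals such that Cₙ|wₙ(aₙ)| ≥ ‖wₙ‖_E where wₙ(z) = ∏_{k=0}^{n-1}(z-aₖ), and Mₙ₊₁ the Markov constant of degree n+1 for E (assumed finite). Write Δ⁽ᵏ⁾ = ∏_{j∈{0,...,n}\{k}}(aₖ - aⱼ). Then ‖wₙ‖_E/Cₙ ≤ max_{0≤k≤n} |Δ⁽ᵏ⁾| ≤ Mₙ₊₁·‖wₙ₊₁‖_E. -/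
/-!
With `w = ∏_{j ≤ n} (X - aⱼ)` (Mathlib's `Lagrange.nodal`), each `Δ⁽ᵏ⁾` equals `w'(aₖ)`, so it is
bounded by the sup norm of `w'` on `E` and hence, by the Markov inequality, by `M ‖w‖_E`.
The lower bound is the term `k = n`, since `Δ⁽ⁿ⁾ = wₙ(aₙ)`.
-/

open Polynomial Lagrange Finset

lemma norm_prod_erase_sub_le_sSup_derivative_nodal {𝕜 ι : Type*} [NormedField 𝕜] [DecidableEq ι]
    {E : Set 𝕜} (hE : IsCompact E) {s : Finset ι} {v : ι → 𝕜} (hv : ∀ i ∈ s, v i ∈ E)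
    {i : ι} (hi : i ∈ s) :
    ‖∏ j ∈ s.erase i, (v i - v j)‖ ≤ sSup ((fun z => ‖(derivative (nodal s v)).eval z‖) '' E) := by
  rw [← eval_nodal, ← eval_nodal_derivative_eval_node_eq hi]
  exact le_csSup (hE.image (derivative (nodal s v)).continuous.norm).bddAbove ⟨v i, hv i hi, rfl⟩

lemma erase_range_add_one_self (n : ℕ) : (range (n + 1)).erase n = range n := by
  rw [range_add_one, erase_insert notMem_range_self]

theorem max_delta_bounds (E : Set ℂ) (hE : IsCompact E)
    (a : ℕ → ℂ) (haE : ∀ n, a n ∈ E)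
    (n : ℕ) (C M : ℝ) (hC : 1 ≤ C)
    (hleja : sSup ((fun z => ‖∏ k ∈ Finset.range n, (z - a k)‖) '' E) ≤
      C * ‖∏ k ∈ Finset.range n, (a n - a k)‖)
    (hM : ∀ p : Polynomial ℂ, p ≠ 0 → p.natDegree ≤ n + 1 →
      sSup ((fun z => ‖(Polynomial.derivative p).eval z‖) '' E) ≤
        M * sSup ((fun z => ‖p.eval z‖) '' E)) :
    sSup ((fun z => ‖∏ k ∈ Finset.range n, (z - a k)‖) '' E) / C ≤
      (Finset.range (n + 1)).sup' (by simp)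
        (fun k => ‖∏ j ∈ (Finset.range (n + 1)).erase k, (a k - a j)‖) ∧
    (Finset.range (n + 1)).sup' (by simp)
        (fun k => ‖∏ j ∈ (Finset.range (n + 1)).erase k, (a k - a j)‖) ≤
      M * sSup ((fun z => ‖∏ k ∈ Finset.range (n + 1), (z - a k)‖) '' E) := by
  constructor
  · have hΔn := le_sup' (fun k => ‖∏ j ∈ (range (n + 1)).erase k, (a k - a j)‖)
      (self_mem_range_succ n)
    rw [erase_range_add_one_self] at hΔn
    rw [div_le_iff₀ (by linarith)]
    calc _ ≤ C * ‖∏ k ∈ range n, (a n - a k)‖ := hleja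
      _ ≤ C * _ := by gcongr
      _ = _ := mul_comm _ _
  · refine sup'_le _ _ fun k hk =>
      (norm_prod_erase_sub_le_sSup_derivative_nodal hE (fun i _ => haE i) hk).trans ?_
    simpa only [eval_nodal] using hM _ nodal_ne_zero (by simp)
end
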